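/- arXiv:2410.11268 — 3 statements merged into one kernel-verified Lean document; each statement's English description precedes it below -/
import Mathlib

section
/- Let X ∈ ℝ^{n×d}, y ∈ ℝ^{n}, q ∈ ℝ^{d}, α ∈ ℝ. Form the block matrix Z = [[X, y], [qᵀ, α]] ∈ ℝ^{(n+1)×(d+1)}, the causal mask M = [[0_{n×n}, 0_{n×1}], [1_{1×n}, 0]] ∈ ℝ^{(n+1)×(n+1)}, the query-key matrix Q = I_{(d+1)×(d+1)}, and the value matrix P = [[I_{d×d}, 0_{d×1}], [0_{1×d}, 0]] ∈ ℝ^{(d+1)×(d+1)}. Then the linear attention output satisfies (M ∘ (Z Q Zᵀ)) Z P = [[0_{n×d}, 0_{n×1}], [qᵀ XᵀX + α yᵀ X, 0]], where ∘ denotes the Hadamard (entrywise) product. -/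
open Matrix

lemma mask_hadamard {m m' : Type*} [Fintype m] [Fintype m']
    (A : Matrix (m ⊕ m') (m ⊕ m') ℝ) :
    Matrix.hadamard (Matrix.fromBlocks 0 0 (Matrix.of fun _ _ => (1 : ℝ)) 0) A =
      Matrix.fromBlocks 0 0 (Matrix.of fun i j => A (Sum.inr i) (Sum.inl j)) 0 := by
  ext i j
  rcases i with i | i <;> rcases j with j | j <;>
    simp [Matrix.hadamard]

/-- **Single layer output of linear attention** (Lemma: single layer output).
With `Z = [[X, y], [qᵀ, α]]`, causal mask `M = [[0,0],[1ᵀ,0]]`, query-key matrix `Q = I`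
and value matrix `P = [[I,0],[0,0]]`, the linear attention output
`(M ∘ (Z Q Zᵀ)) Z P` equals `[[0, 0], [qᵀXᵀX + αyᵀX, 0]]`. -/
theorem single_layer_linear_attention_output
    (n d : ℕ) (X : Matrix (Fin n) (Fin d) ℝ) (y : Fin n → ℝ) (q : Fin d → ℝ) (α : ℝ)
    (Z : Matrix (Fin n ⊕ Fin 1) (Fin d ⊕ Fin 1) ℝ)
    (hZ : Z = Matrix.fromBlocks X (Matrix.of fun i _ => y i)
        (Matrix.of fun _ j => q j) (Matrix.of fun _ _ => α))
    (M : Matrix (Fin n ⊕ Fin 1) (Fin n ⊕ Fin 1) ℝ)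
    (hM : M = Matrix.fromBlocks 0 0 (Matrix.of fun _ _ => (1 : ℝ)) 0)
    (Q : Matrix (Fin d ⊕ Fin 1) (Fin d ⊕ Fin 1) ℝ) (hQ : Q = 1)
    (P : Matrix (Fin d ⊕ Fin 1) (Fin d ⊕ Fin 1) ℝ)
    (hP : P = Matrix.fromBlocks 1 0 0 0) :
    (Matrix.hadamard M (Z * Q * Zᵀ)) * Z * P =
      Matrix.fromBlocks 0 0
        (Matrix.of fun _ j => Matrix.vecMul q (Xᵀ * X) j + α * Matrix.vecMul y X j) 0 := by
  subst hM hQ hP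
  rw [Matrix.mul_one, mask_hadamard, hZ, Matrix.fromBlocks_multiply,
    Matrix.fromBlocks_multiply]
  have h0 : ∀ i j, (Z * Zᵀ) (Sum.inr i) (Sum.inl j)
      = ∑ k, q k * X j k + α * y j := by
    intro i j
    simp [hZ, Matrix.mul_apply, Fintype.sum_sum_type]
  simp only [Matrix.mul_zero, Matrix.zero_mul, Matrix.mul_one, add_zero, zero_add]
  ext i j
  rcases i with i | i <;> rcases j with j | j <;>
    simp [Matrix.mul_apply, Matrix.vecMul, dotProduct, add_mul, Finset.sum_mul,
      Finset.sum_add_distrib]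
  simp [Finset.mul_sum, mul_assoc, add_comm]
  exact Finset.sum_comm
end

section
/- Let X ∈ ℝ^{n×d}, y ∈ ℝ^{n}, q^{(0)} ∈ ℝ^{d}, α ∈ ℝ with α ≠ 0, and let η^{(t)} > 0. Let Q = I_{(d+1)×(d+1)}, P = [[I_{d×d}, 0], [0, 0]], M = [[0_{n×n}, 0_{n×1}], [1_{1×n}, 0]], and define the looped iteration on Z^{(0)} = [[X, y], [q^{(0)ᵀ}, α]] by Z^{(t)} = Z^{(t−1)} − η^{(t−1)} (M ∘ (Z^{(t−1)} Q Z^{(t−1)ᵀ})) Z^{(t−1)} P for t = 1, …, T. Let θ^{(t)} be the gradient descent sequence θ^{(t)} = θ^{(t−1)} − η^{(t−1)}(XᵀXθ^{(t−1)} − Xᵀy) with θ^{(0)} = −(1/α) q^{(0)}. Then Z^{(T)} = [[X, y], [−α θ^{(T)ᵀ}, α]]; in particular, the transformer output −(Z^{(T)}_{n+1, 1:d})ᵀ equals α θ^{(T)}. -/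
open Matrix


lemma hadamard_fromBlocks {R m n p q : Type*} [Mul R]
    (A : Matrix m n R) (B : Matrix m q R) (C : Matrix p n R) (D : Matrix p q R)
    (A' : Matrix m n R) (B' : Matrix m q R) (C' : Matrix p n R) (D' : Matrix p q R) :
    Matrix.hadamard (Matrix.fromBlocks A B C D) (Matrix.fromBlocks A' B' C' D') =
      Matrix.fromBlocks (Matrix.hadamard A A') (Matrix.hadamard B B')
        (Matrix.hadamard C C') (Matrix.hadamard D D') := by
  ext i j; cases i <;> cases j <;> rfl

lemma ones_hadamard {R m n : Type*} [MulOneClass R] (C : Matrix m n R) :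
    Matrix.hadamard (Matrix.of fun _ _ => (1 : R)) C = C := by
  ext i j; simp [Matrix.hadamard]


/-- **Looped linear transformer implements gradient descent.**
With `Q = I`, `P = [[I,0],[0,0]]`, causal mask `M = [[0,0],[1ᵀ,0]]`, and looped iteration
`Z^{(t)} = Z^{(t−1)} − η^{(t−1)} (M ∘ (Z^{(t−1)} Q Z^{(t−1)ᵀ})) Z^{(t−1)} P` started from
`Z^{(0)} = [[X, y], [q^{(0)ᵀ}, α]]`, and with `θ^{(t)}` the gradient descent sequence
from `θ^{(0)} = −(1/α) q^{(0)}`, we have `Z^{(T)} = [[X, y], [−α θ^{(T)ᵀ}, α]]`;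
in particular the transformer output `−(Z^{(T)}_{n+1,1:d})ᵀ` equals `α θ^{(T)}`. -/
theorem looped_transformer_output
    (n d : ℕ) (X : Matrix (Fin n) (Fin d) ℝ) (y : Fin n → ℝ) (q0 : Fin d → ℝ)
    (α : ℝ) (hα : α ≠ 0) (η : ℕ → ℝ) (hη : ∀ t, 0 < η t) (T : ℕ)
    (Q : Matrix (Fin d ⊕ Fin 1) (Fin d ⊕ Fin 1) ℝ) (hQ : Q = 1)
    (P : Matrix (Fin d ⊕ Fin 1) (Fin d ⊕ Fin 1) ℝ) (hP : P = Matrix.fromBlocks 1 0 0 0)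
    (M : Matrix (Fin n ⊕ Fin 1) (Fin n ⊕ Fin 1) ℝ)
    (hM : M = Matrix.fromBlocks 0 0 (Matrix.of fun _ _ => (1 : ℝ)) 0)
    (Z : ℕ → Matrix (Fin n ⊕ Fin 1) (Fin d ⊕ Fin 1) ℝ)
    (hZ0 : Z 0 = Matrix.fromBlocks X (Matrix.of fun i _ => y i)
        (Matrix.of fun _ j => q0 j) (Matrix.of fun _ _ => α))
    (hZ : ∀ t, Z (t + 1) =
        Z t - η t • ((Matrix.hadamard M (Z t * Q * (Z t)ᵀ)) * Z t * P))
    (θ : ℕ → Fin d → ℝ)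
    (hθ0 : θ 0 = (-(1 / α)) • q0)
    (hθ : ∀ t, θ (t + 1) = θ t - η t • ((Xᵀ * X).mulVec (θ t) - Xᵀ.mulVec y)) :
    Z T = Matrix.fromBlocks X (Matrix.of fun i _ => y i)
        (Matrix.of fun _ j => -α * θ T j) (Matrix.of fun _ _ => α) ∧
      (fun j => -(Z T (Sum.inr 0) (Sum.inl j))) = α • θ T := by
  have key : ∀ t, Z t = Matrix.fromBlocks X (Matrix.of fun i _ => y i)
      (Matrix.of fun _ j => -α * θ t j) (Matrix.of fun _ _ => α) := by
    intro t
    induction t with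
    | zero =>
      rw [hZ0, hθ0]
      ext i j
      simp only [Matrix.of_apply, Pi.smul_apply, smul_eq_mul]
      field_simp
    | succ t ih =>
      rw [hZ t, ih, hθ t, hQ, hP, hM, Matrix.mul_one, Matrix.fromBlocks_transpose,
        Matrix.fromBlocks_multiply, hadamard_fromBlocks, Matrix.zero_hadamard, ones_hadamard, Matrix.fromBlocks_multiply,
        Matrix.fromBlocks_multiply]
      simp only [Matrix.zero_hadamard, Matrix.zero_mul, Matrix.mul_zero, Matrix.mul_one,
        add_zero, zero_add, Matrix.fromBlocks_smul, smul_zero, sub_eq_add_neg,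
        Matrix.fromBlocks_neg, neg_zero, Matrix.fromBlocks_add]
      rw [Matrix.fromBlocks_inj]
      refine ⟨rfl, rfl, ?_, rfl⟩
      ext i j
      simp [Matrix.mul_apply, Matrix.mulVec, dotProduct, Finset.mul_sum,
        Finset.sum_mul, Fin.sum_univ_one, mul_sub, mul_add, sub_eq_add_neg]
      rw [Finset.sum_comm, ← Finset.sum_neg_distrib, ← Finset.sum_neg_distrib, ← Finset.sum_add_distrib]
      refine Finset.sum_congr rfl fun i _ => ?_
      simp only [add_mul, neg_mul, mul_add, mul_neg, neg_add_rev, neg_neg,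
        Finset.mul_sum, Finset.sum_mul]
      congr 1
      · ring
      · exact Finset.sum_congr rfl fun _ _ => by ring
  refine ⟨key T, ?_⟩
  funext j
  rw [key T]
  simp [Matrix.fromBlocks]
end

section
/- Let X ∈ ℝ^{n×d} with XᵀX invertible (hence positive definite), let θ* ∈ ℝ^{d} with ‖θ*‖₂ = 1, let y = Xθ*, and let α ∈ ℝ. Let κ = λ_max(XᵀX)/λ_min(XᵀX) be the condition number of XᵀX. Define the gradient descent sequence θ^{(t+1)} = θ^{(t)} − η(XᵀXθ^{(t)} − Xᵀy) with step size η = 1/‖XᵀX‖ and initial point θ^{(0)} = 0 (corresponding to the looped transformer initialized with q^{(0)} = 0, whose output after T loops is α θ^{(T)}). Then after T iterations, the prediction error satisfies |⟨α θ^{(T)}, θ*⟩ − α| ≤ |α| · exp(−T/(2κ)). -/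
open Matrix
open scoped RealInnerProductSpace

/-- The spectral norm (ℓ₂ operator norm) of a square real matrix. -/
noncomputable def matrixSpectralNorm {d : ℕ} (A : Matrix (Fin d) (Fin d) ℝ) : ℝ :=
  ‖Matrix.toEuclideanCLM (𝕜 := ℝ) A‖

/-! The error `θ t - θ*` evolves by `e ↦ e - η XᵀX e`, so along an orthonormal eigenbasis `bⱼ`
of `XᵀX` its coordinates are `-(1 - η λⱼ) ^ t ⟨bⱼ, θ*⟩`. The step `η = 1 / ‖XᵀX‖ = 1 / λ_max` puts
every factor `1 - η λⱼ` in `[0, 1 - 1/κ]`, so `|⟨θ T, θ*⟩ - ‖θ*‖²| ≤ (1 - 1/κ) ^ T ‖θ*‖²`, and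
`(1 - 1/κ) ^ T ≤ exp (-T/κ)`. -/

lemma pi_norm_eq_iSup_of_nonneg {ι : Type*} [Fintype ι] {f : ι → ℝ} (hf : ∀ i, 0 ≤ f i) :
    ‖f‖ = ⨆ i, f i := by
  refine le_antisymm ((pi_norm_le_iff_of_nonneg (Real.iSup_nonneg hf)).2 fun i ↦ ?_) ?_
  · rw [Real.norm_of_nonneg (hf i)]
    exact le_ciSup (Finite.bddAbove_range f) i
  · exact Real.iSup_le (fun i ↦ (le_abs_self _).trans (norm_le_pi_norm f i)) (norm_nonneg _)

lemma one_sub_div_iSup_mem_Icc {ι : Type*} [Finite ι] {f : ι → ℝ} (hf : ∀ i, 0 ≤ f i) (j : ι) :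
    1 - f j / ⨆ i, f i ∈ Set.Icc 0 (1 - (⨅ i, f i) / ⨆ i, f i) := by
  have hle : f j ≤ ⨆ i, f i := le_ciSup (Finite.bddAbove_range f) j
  have hge : (⨅ i, f i) ≤ f j := ciInf_le (Finite.bddBelow_range f) j
  exact ⟨sub_nonneg.mpr (div_le_one_of_le₀ hle ((hf j).trans hle)),
    sub_le_sub_left (div_le_div_of_nonneg_right hge ((hf j).trans hle)) 1⟩

namespace Matrix

open scoped Matrix.Norms.L2Operator in
lemma IsHermitian.l2_opNorm_eq_norm_eigenvalues {𝕜 n : Type*} [RCLike 𝕜] [Fintype n]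
    [DecidableEq n] {A : Matrix n n 𝕜} (hA : A.IsHermitian) : ‖A‖ = ‖hA.eigenvalues‖ := by
  conv_lhs => rw [hA.spectral_theorem]
  rw [Unitary.conjStarAlgAut_apply, ← Unitary.coe_star, CStarRing.norm_mul_coe_unitary,
    CStarRing.norm_coe_unitary_mul, l2_opNorm_diagonal]
  simp [Pi.norm_def]

lemma PosSemidef.matrixSpectralNorm_eq_iSup_eigenvalues {d : ℕ} {A : Matrix (Fin d) (Fin d) ℝ}
    (hA : A.PosSemidef) : matrixSpectralNorm A = ⨆ i, hA.1.eigenvalues i := by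
  rw [← pi_norm_eq_iSup_of_nonneg hA.eigenvalues_nonneg, ← hA.1.l2_opNorm_eq_norm_eigenvalues]
  rfl

lemma IsHermitian.inner_eigenvectorBasis_mulVec {𝕜 n : Type*} [RCLike 𝕜] [Fintype n]
    [DecidableEq n] {A : Matrix n n 𝕜} (hA : A.IsHermitian) (j : n) (v : EuclideanSpace 𝕜 n) :
    inner 𝕜 (hA.eigenvectorBasis j) (WithLp.toLp 2 (A *ᵥ v)) =
      hA.eigenvalues j * inner 𝕜 (hA.eigenvectorBasis j) v := by
  have hb : toEuclideanLin A (hA.eigenvectorBasis j) =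
      (hA.eigenvalues j : 𝕜) • hA.eigenvectorBasis j := by
    rw [toLpLin_apply, hA.mulVec_eigenvectorBasis, RCLike.real_smul_eq_coe_smul (K := 𝕜)]
    rfl
  rw [show WithLp.toLp 2 (A *ᵥ v) = toEuclideanLin A v from rfl,
    ← (isSymmetric_toEuclideanLin_iff.mpr hA) _ _, hb, inner_smul_left, RCLike.conj_ofReal]

lemma IsHermitian.inner_eigenvectorBasis_of_iterate {n : Type*} [Fintype n] [DecidableEq n]
    {A : Matrix n n ℝ} (hA : A.IsHermitian) {η : ℝ} {e : ℕ → EuclideanSpace ℝ n}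
    (he : ∀ t, e (t + 1) = e t - η • WithLp.toLp 2 (A *ᵥ e t)) (j : n) (t : ℕ) :
    ⟪hA.eigenvectorBasis j, e t⟫ =
      (1 - η * hA.eigenvalues j) ^ t * ⟪hA.eigenvectorBasis j, e 0⟫ := by
  induction t with
  | zero => simp
  | succ t ih =>
    rw [he, inner_sub_right, inner_smul_right, hA.inner_eigenvectorBasis_mulVec, ih, pow_succ,
      RCLike.ofReal_real_eq_id, id]
    ring

end Matrix

lemma OrthonormalBasis.abs_sum_mul_sq_inner_le {ι E : Type*} [Fintype ι] [NormedAddCommGroup E]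
    [InnerProductSpace ℝ E] (b : OrthonormalBasis ι ℝ E) {c : ι → ℝ} {r : ℝ}
    (hc : ∀ i, |c i| ≤ r) (x : E) : |∑ i, c i * ⟪b i, x⟫ ^ 2| ≤ r * ‖x‖ ^ 2 := by
  rw [← b.sum_sq_inner_right, Finset.mul_sum]
  refine (Finset.abs_sum_le_sum_abs _ _).trans (Finset.sum_le_sum fun i _ ↦ ?_)
  rw [abs_mul, abs_of_nonneg (sq_nonneg ⟪b i, x⟫)]
  exact mul_le_mul_of_nonneg_right (hc i) (sq_nonneg _)

noncomputable def leastSquaresGradient {m n : Type*} [Fintype m] [Fintype n] (X : Matrix m n ℝ)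
    (y : m → ℝ) (θ : EuclideanSpace ℝ n) : EuclideanSpace ℝ n :=
  WithLp.toLp 2 ((Xᵀ * X) *ᵥ θ - Xᵀ *ᵥ y)

lemma leastSquaresGradient_mulVec {m n : Type*} [Fintype m] [Fintype n] (X : Matrix m n ℝ)
    (θs θ : EuclideanSpace ℝ n) :
    leastSquaresGradient X (X *ᵥ θs) θ =
      WithLp.toLp 2 ((Xᵀ * X) *ᵥ (θ - θs : EuclideanSpace ℝ n)) := by
  rw [leastSquaresGradient, mulVec_mulVec, WithLp.ofLp_sub, mulVec_sub]

theorem abs_inner_gradientDescent_sub_sq_norm_le {m n : Type*} [Fintype m] [Fintype n]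
    [DecidableEq n] {X : Matrix m n ℝ} (hH : (Xᵀ * X).IsHermitian) {θs : EuclideanSpace ℝ n}
    {η r : ℝ} {θ : ℕ → EuclideanSpace ℝ n} (hθ0 : θ 0 = 0)
    (hθ : ∀ t, θ (t + 1) = θ t - η • leastSquaresGradient X (X *ᵥ θs) (θ t))
    (hr : ∀ j, |1 - η * hH.eigenvalues j| ≤ r) (T : ℕ) :
    |⟪θ T, θs⟫ - ‖θs‖ ^ 2| ≤ r ^ T * ‖θs‖ ^ 2 := by
  set b := hH.eigenvectorBasis
  have herr : ∀ t, θ (t + 1) - θs =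
      (θ t - θs) - η • WithLp.toLp 2 ((Xᵀ * X) *ᵥ (θ t - θs : EuclideanSpace ℝ n)) := by
    intro t
    rw [hθ, leastSquaresGradient_mulVec]
    abel
  have hexpand : ⟪θ T, θs⟫ - ‖θs‖ ^ 2 =
      -∑ j, (1 - η * hH.eigenvalues j) ^ T * ⟪b j, θs⟫ ^ 2 := by
    rw [← real_inner_self_eq_norm_sq, ← inner_sub_left, ← b.sum_inner_mul_inner,
      ← Finset.sum_neg_distrib]
    refine Finset.sum_congr rfl fun j _ ↦ ?_
    rw [real_inner_comm, hH.inner_eigenvectorBasis_of_iterate (e := fun t ↦ θ t - θs) herr, hθ0,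
      zero_sub, inner_neg_right]
    ring
  rw [hexpand, abs_neg]
  refine b.abs_sum_mul_sq_inner_le (fun j ↦ ?_) θs
  rw [abs_pow]
  exact pow_le_pow_left₀ (abs_nonneg _) (hr j) T

lemma Real.one_sub_pow_le_exp_neg_mul {s : ℝ} (hs : s ≤ 1) (T : ℕ) :
    (1 - s) ^ T ≤ Real.exp (-(T * s)) := by
  rw [neg_mul_eq_mul_neg, Real.exp_nat_mul]
  exact pow_le_pow_left₀ (by linarith) (Real.one_sub_le_exp_neg s) T

theorem looped_transformer_prediction_error_general
    (n d : ℕ) (X : Matrix (Fin n) (Fin d) ℝ)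
    (θs : EuclideanSpace ℝ (Fin d)) (hθs : ‖θs‖ = 1)
    (y : Fin n → ℝ) (hy : y = X.mulVec θs) (α : ℝ)
    (hH : (Xᵀ * X).IsHermitian)
    (κ : ℝ) (hκ : κ = (⨆ i, hH.eigenvalues i) / ⨅ i, hH.eigenvalues i)
    (η : ℝ) (hη : η = 1 / matrixSpectralNorm (Xᵀ * X))
    (θ : ℕ → EuclideanSpace ℝ (Fin d)) (hθ0 : θ 0 = 0)
    (hθ : ∀ t, θ (t + 1) = θ t - η • (show EuclideanSpace ℝ (Fin d) from
        WithLp.toLp 2 ((Xᵀ * X).mulVec (θ t) - Xᵀ.mulVec y)))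
    (T : ℕ) :
    |(⟪α • θ T, θs⟫ : ℝ) - α| ≤ |α| * Real.exp (-(T : ℝ) / (2 * κ)) := by
  subst hy
  obtain ⟨j₀⟩ : Nonempty (Fin d) := by
    refine Fin.pos_iff_nonempty.mp (Nat.pos_of_ne_zero fun hd ↦ ?_)
    subst hd
    simp [EuclideanSpace.norm_eq] at hθs
  have hA : (Xᵀ * X).PosSemidef := by simpa using posSemidef_conjTranspose_mul_self X
  have hμ : ∀ j, 0 ≤ hH.eigenvalues j := hA.eigenvalues_nonneg
  have hκ' : κ⁻¹ = (⨅ j, hH.eigenvalues j) / ⨆ j, hH.eigenvalues j := by rw [hκ, inv_div]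
  have hrate : ∀ j, 1 - η * hH.eigenvalues j ∈ Set.Icc 0 (1 - κ⁻¹) := fun j ↦ by
    rw [hη, hA.matrixSpectralNorm_eq_iSup_eigenvalues, hκ', one_div_mul_eq_div]
    exact one_sub_div_iSup_mem_Icc hμ j
  have hconv := abs_inner_gradientDescent_sub_sq_norm_le hH hθ0 hθ
    (fun j ↦ (abs_of_nonneg (hrate j).1).trans_le (hrate j).2) T
  rw [hθs, one_pow, mul_one] at hconv
  have hκ_nonneg : 0 ≤ κ⁻¹ := hκ' ▸ div_nonneg (Real.iInf_nonneg hμ) (Real.iSup_nonneg hμ)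
  calc |⟪α • θ T, θs⟫ - α| = |α| * |⟪θ T, θs⟫ - 1| := by
        rw [real_inner_smul_left, ← abs_mul, mul_sub, mul_one]
    _ ≤ |α| * (1 - κ⁻¹) ^ T := by gcongr
    _ ≤ |α| * Real.exp (-(T * κ⁻¹)) := by
        gcongr
        exact Real.one_sub_pow_le_exp_neg_mul (sub_nonneg.mp ((hrate j₀).1.trans (hrate j₀).2)) T
    _ ≤ |α| * Real.exp (-(T : ℝ) / (2 * κ)) := by
        gcongr
        rw [neg_div, neg_le_neg_iff, div_eq_mul_inv, mul_inv, ← mul_assoc]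
        have : (0 : ℝ) ≤ T * κ⁻¹ := by positivity
        linarith

/-- **Main result**: for the linear vector generation task with in-context examples
`(X, y = Xθ*)`, `‖θ*‖₂ = 1`, query `α`, and condition number `κ = λ_max(XᵀX)/λ_min(XᵀX)`,
the looped transformer output `α θ^{(T)}` (where `θ^{(T)}` is the `T`-th gradient descent
iterate with step `η = 1/‖XᵀX‖` from `θ^{(0)} = 0`) satisfies the prediction error bound
`|⟨α θ^{(T)}, θ*⟩ − α| ≤ |α| exp(−T/(2κ))`. -/
theorem looped_transformer_prediction_error
    (n d : ℕ) (X : Matrix (Fin n) (Fin d) ℝ) (hinv : IsUnit (Xᵀ * X))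
    (θs : EuclideanSpace ℝ (Fin d)) (hθs : ‖θs‖ = 1)
    (y : Fin n → ℝ) (hy : y = X.mulVec θs) (α : ℝ)
    (hH : (Xᵀ * X).IsHermitian)
    (κ : ℝ) (hκ : κ = (⨆ i, hH.eigenvalues i) / ⨅ i, hH.eigenvalues i)
    (η : ℝ) (hη : η = 1 / matrixSpectralNorm (Xᵀ * X))
    (θ : ℕ → EuclideanSpace ℝ (Fin d)) (hθ0 : θ 0 = 0)
    (hθ : ∀ t, θ (t + 1) = θ t - η • (show EuclideanSpace ℝ (Fin d) from
        WithLp.toLp 2 ((Xᵀ * X).mulVec (θ t) - Xᵀ.mulVec y)))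
    (T : ℕ) :
    |(⟪α • θ T, θs⟫ : ℝ) - α| ≤ |α| * Real.exp (-(T : ℝ) / (2 * κ)) :=
  looped_transformer_prediction_error_general n d X θs hθs y hy α hH κ hκ η hη θ hθ0 hθ T
end
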